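/- arXiv:2303.00182 — 2 statements merged into one kernel-verified Lean document; each statement's English description precedes it below -/
import Mathlib

section
/- Let W ∈ ℝ^{n×n} be a symmetric matrix and let W_wd denote W with its diagonal entries set to zero. Then the maximum of x^T W x over x ∈ {−1,1}^n equals Tr(W) plus the maximum of y^T W_wd y over the box y ∈ [−1,1]^n: max_{x ∈ {−1,1}^n} x^T W x = Tr(W) + max_{y ∈ [−1,1]^n} y^T W_wd y. -/
open Finset Matrix

private lemma update_decomp {n : ℕ} (z : Fin n → ℝ) (i : Fin n) (t : ℝ) :
    Function.update z i t = Function.update z i 0 + t • (Pi.single i 1 : Fin n → ℝ) := by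
  funext j
  by_cases h : j = i
  · subst h; simp [Function.update_self]
  · simp [Function.update_of_ne h, Pi.single_eq_of_ne h]

private lemma quad_update {n : ℕ} (M : Matrix (Fin n) (Fin n) ℝ) (z : Fin n → ℝ)
    (i : Fin n) (hdiag : M i i = 0) (t : ℝ) :
    (Function.update z i t) ⬝ᵥ M.mulVec (Function.update z i t)
      = (Function.update z i 0) ⬝ᵥ M.mulVec (Function.update z i 0)
        + t * ((M.mulVec (Function.update z i 0)) i
               + ((Function.update z i 0) ⬝ᵥ fun j => M j i)) := by
  rw [update_decomp z i t]
  have h1 : M.mulVec (t • (Pi.single i 1 : Fin n → ℝ)) = t • fun j => M j i := by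
    rw [Matrix.mulVec_smul, Matrix.mulVec_single]
    funext j; simp
  rw [Matrix.mulVec_add, h1]
  rw [add_dotProduct, dotProduct_add, dotProduct_add]
  rw [smul_dotProduct, smul_dotProduct, dotProduct_smul, dotProduct_smul]
  have h2 : (Pi.single i (1:ℝ)) ⬝ᵥ M.mulVec (Function.update z i 0)
      = (M.mulVec (Function.update z i 0)) i := by
    rw [single_dotProduct, one_mul]
  have h3 : (Pi.single i (1:ℝ)) ⬝ᵥ (fun j => M j i) = M i i := by
    rw [single_dotProduct, one_mul]
  have h4 : (Function.update z i 0) ⬝ᵥ (fun j => M j i)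
      = (Function.update z i 0) ⬝ᵥ fun j => M j i := rfl
  rw [h2, h3, hdiag]
  simp only [smul_eq_mul]
  ring

/-- One coordinate can be pushed to ±1 without decreasing the quadratic form. -/
private lemma step_lemma {n : ℕ} (M : Matrix (Fin n) (Fin n) ℝ)
    (hdiag : ∀ i, M i i = 0) (z : Fin n → ℝ) (hz : ∀ i, z i ∈ Set.Icc (-1:ℝ) 1)
    (i : Fin n) :
    ∃ t : ℝ, (t = 1 ∨ t = -1) ∧
      z ⬝ᵥ M.mulVec z ≤
        (Function.update z i t) ⬝ᵥ M.mulVec (Function.update z i t) := by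
  set B : ℝ := (M.mulVec (Function.update z i 0)) i
               + ((Function.update z i 0) ⬝ᵥ fun j => M j i) with hB
  refine ⟨if 0 ≤ B then 1 else -1, by split <;> simp, ?_⟩
  have hzz : z = Function.update z i (z i) := by
    funext j; by_cases h : j = i
    · subst h; simp
    · simp [Function.update_of_ne h]
  have e1 := quad_update M z i (hdiag i) (z i)
  have e2 := quad_update M z i (hdiag i) (if 0 ≤ B then 1 else -1)
  rw [← hzz] at e1
  rw [e1, e2, ← hB]
  have hzi := hz i
  have h1 : z i * B ≤ |B| := by
    calc z i * B ≤ |z i * B| := le_abs_self _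
    _ = |z i| * |B| := abs_mul _ _
    _ ≤ 1 * |B| := by
        apply mul_le_mul_of_nonneg_right _ (abs_nonneg _)
        rw [abs_le]; exact ⟨hzi.1, hzi.2⟩
    _ = |B| := one_mul _
  have h2 : (if 0 ≤ B then (1:ℝ) else -1) * B = |B| := by
    split <;> rename_i h
    · rw [one_mul, abs_of_nonneg h]
    · rw [abs_of_neg (lt_of_not_ge h)]; ring
  rw [h2]
  linarith

/-- The quadratic form on the box is dominated by its values on cube vertices. -/
private lemma push_to_vertices {n : ℕ} (M : Matrix (Fin n) (Fin n) ℝ)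
    (hdiag : ∀ i, M i i = 0) :
    ∀ d : ℕ, ∀ y : Fin n → ℝ, (∀ i, y i ∈ Set.Icc (-1:ℝ) 1) →
      (∀ i : Fin n, (i : ℕ) < n - d → y i = 1 ∨ y i = -1) →
      ∃ x : Fin n → ℝ, (∀ i, x i = 1 ∨ x i = -1) ∧
        y ⬝ᵥ M.mulVec y ≤ x ⬝ᵥ M.mulVec x := by
  intro d
  induction d with
  | zero =>
    intro y hy hfix
    exact ⟨y, fun i => hfix i (by simpa using i.isLt), le_refl _⟩
  | succ d ih =>
    intro y hy hfix
    by_cases hcase : n - d ≤ n - (d + 1)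
    · exact ih y hy (fun i hi => hfix i (lt_of_lt_of_le hi hcase))
    · push_neg at hcase
      have hk : n - (d + 1) < n := lt_of_lt_of_le hcase (Nat.sub_le _ _)
      set k : Fin n := ⟨n - (d + 1), hk⟩ with hkdef
      obtain ⟨t, ht, hle⟩ := step_lemma M hdiag y hy k
      refine ?_
      set z := Function.update y k t with hzdef
      have hzbox : ∀ i, z i ∈ Set.Icc (-1:ℝ) 1 := by
        intro i
        by_cases h : i = k
        · subst h; simp only [hzdef, Function.update_self]
          rcases ht with h | h <;> subst h <;> constructor <;> norm_num
        · simp only [hzdef, Function.update_of_ne h]; exact hy i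
      have hzfix : ∀ i : Fin n, (i : ℕ) < n - d → z i = 1 ∨ z i = -1 := by
        intro i hi
        by_cases h : i = k
        · subst h; simp only [hzdef, Function.update_self]; exact ht
        · simp only [hzdef, Function.update_of_ne h]
          apply hfix
          have : (i : ℕ) ≠ n - (d + 1) := fun hc => h (Fin.ext hc)
          have h1 : (i : ℕ) ≤ n - d - 1 := Nat.le_sub_one_of_lt hi
          have h2 : n - d - 1 = n - (d + 1) := by omega
          omega
      obtain ⟨x, hx, hle2⟩ := ih z hzbox hzfix
      exact ⟨x, hx, le_trans hle hle2⟩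

private lemma quad_bound {n : ℕ} (M : Matrix (Fin n) (Fin n) ℝ)
    (y : Fin n → ℝ) (hy : ∀ i, y i ∈ Set.Icc (-1:ℝ) 1) :
    y ⬝ᵥ M.mulVec y ≤ ∑ i, ∑ j, |M i j| := by
  have habs : ∀ i, |y i| ≤ 1 := fun i => abs_le.mpr ⟨(hy i).1, (hy i).2⟩
  calc y ⬝ᵥ M.mulVec y = ∑ i, ∑ j, y i * (M i j * y j) := by
        simp [dotProduct, Matrix.mulVec, Finset.mul_sum]
  _ ≤ ∑ i, ∑ j, |M i j| := by
      apply Finset.sum_le_sum; intro i _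
      apply Finset.sum_le_sum; intro j _
      calc y i * (M i j * y j) ≤ |y i * (M i j * y j)| := le_abs_self _
      _ = |y i| * |M i j| * |y j| := by rw [abs_mul, abs_mul]; ring
      _ ≤ 1 * |M i j| * 1 := by
          apply mul_le_mul (mul_le_mul_of_nonneg_right (habs i) (abs_nonneg _))
            (habs j) (abs_nonneg _)
          positivity
      _ = |M i j| := by ring

/-- for a symmetric `W ∈ ℝ^{n×n}`, the maximum of `x^T W x` over
`x ∈ {−1,1}^n` equals `Tr(W)` plus the maximum of `y^T W_wd y` over the box
`y ∈ [−1,1]^n`, where `W_wd` is `W` with its diagonal set to zero. -/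
theorem binary_quadratic_eq_trace_add_box_max (n : ℕ) (hn : 1 ≤ n)
    (W : Matrix (Fin n) (Fin n) ℝ) (hW : W.IsSymm) :
    sSup {v : ℝ | ∃ x : Fin n → ℝ, (∀ i, x i = 1 ∨ x i = -1) ∧ v = x ⬝ᵥ W.mulVec x}
      = W.trace +
        sSup {v : ℝ | ∃ y : Fin n → ℝ, (∀ i, y i ∈ Set.Icc (-1 : ℝ) 1) ∧
          v = y ⬝ᵥ (W - Matrix.diagonal fun i => W i i).mulVec y} := by
  set M : Matrix (Fin n) (Fin n) ℝ := W - Matrix.diagonal fun i => W i i with hM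
  have hdiag : ∀ i, M i i = 0 := by
    intro i; simp [hM, Matrix.sub_apply, Matrix.diagonal_apply_eq]
  -- decomposition of x^T W x for cube vertices
  have hdecomp : ∀ x : Fin n → ℝ, (∀ i, x i = 1 ∨ x i = -1) →
      x ⬝ᵥ W.mulVec x = W.trace + x ⬝ᵥ M.mulVec x := by
    intro x hx
    have hsq : ∀ i, x i * x i = 1 := by
      intro i; rcases hx i with h | h <;> rw [h] <;> norm_num
    have : x ⬝ᵥ (Matrix.diagonal fun i => W i i).mulVec x = W.trace := by
      rw [Matrix.trace]
      simp only [dotProduct, Matrix.mulVec_diagonal, Matrix.diag_apply]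
      apply Finset.sum_congr rfl
      intro i _
      rw [show x i * (W i i * x i) = W i i * (x i * x i) by ring, hsq i, mul_one]
    have hsub : M.mulVec x = W.mulVec x - (Matrix.diagonal fun i => W i i).mulVec x := by
      rw [hM, Matrix.sub_mulVec]
    rw [hsub, dotProduct_sub, this]
    ring
  set S1 : Set ℝ := {v : ℝ | ∃ x : Fin n → ℝ, (∀ i, x i = 1 ∨ x i = -1) ∧
    v = x ⬝ᵥ W.mulVec x} with hS1
  set S1' : Set ℝ := {v : ℝ | ∃ x : Fin n → ℝ, (∀ i, x i = 1 ∨ x i = -1) ∧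
    v = x ⬝ᵥ M.mulVec x} with hS1'
  set S2 : Set ℝ := {v : ℝ | ∃ y : Fin n → ℝ, (∀ i, y i ∈ Set.Icc (-1 : ℝ) 1) ∧
    v = y ⬝ᵥ M.mulVec y} with hS2
  have hsub12 : S1' ⊆ S2 := by
    rintro v ⟨x, hx, rfl⟩
    refine ⟨x, fun i => ?_, rfl⟩
    rcases hx i with h | h <;> rw [h] <;> constructor <;> norm_num
  have hne1' : S1'.Nonempty := ⟨(fun _ => 1) ⬝ᵥ M.mulVec (fun _ => 1),
    fun _ => 1, fun _ => Or.inl rfl, rfl⟩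
  have hbdd2 : BddAbove S2 := by
    refine ⟨∑ i, ∑ j, |M i j|, ?_⟩
    rintro v ⟨y, hy, rfl⟩
    exact quad_bound M y hy
  have hbdd1' : BddAbove S1' := hbdd2.mono hsub12
  have hne2 : S2.Nonempty := hsub12 hne1'.choose_spec |> fun h => ⟨_, h⟩
  -- sSup S1' = sSup S2
  have hkey : sSup S1' = sSup S2 := by
    apply le_antisymm
    · exact csSup_le_csSup hbdd2 hne1' hsub12
    · apply csSup_le hne2
      rintro v ⟨y, hy, rfl⟩
      obtain ⟨x, hx, hle⟩ := push_to_vertices M hdiag n y hy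
        (fun i hi => absurd hi (by omega))
      exact le_trans hle (le_csSup hbdd1' ⟨x, hx, rfl⟩)
  -- S1 = image of S1' under (W.trace + ·)
  have himg : S1 = (fun v => W.trace + v) '' S1' := by
    ext v
    constructor
    · rintro ⟨x, hx, rfl⟩
      exact ⟨x ⬝ᵥ M.mulVec x, ⟨x, hx, rfl⟩, (hdecomp x hx).symm⟩
    · rintro ⟨w, ⟨x, hx, rfl⟩, rfl⟩
      exact ⟨x, hx, (hdecomp x hx).symm⟩
  rw [himg, ← hkey]
  have := (OrderIso.addLeft W.trace).map_csSup' hne1' hbdd1'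
  simpa using this.symm
end

section
/- Let G ∈ ℝ^{n×n} be a symmetric matrix and z ∈ ℝ^n. Then the expectation of the product of the quadratic form x^T G x and the linear form z^T x under the product Bernoulli distribution with mean vector y is E_y[(x^T G x)(z^T x)] = 2 y^T G_wd z + Tr(G)(z^T y) + Σ_{(i,j,k) pairwise distinct} y_i y_j y_k G_{ij} z_k. -/
open Finset Matrix

/-- Expectation `E_y[g]` of `g : {−1,1}^n → ℝ` under the product Bernoulli distribution in
which the coordinates are independent with `P(x_i = 1) = (1 + y_i)/2` and
`P(x_i = −1) = (1 − y_i)/2`, so that `E_y[x_i] = y_i`. -/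
noncomputable def berE (n : ℕ) (y : Fin n → ℝ) (g : (Fin n → ℝ) → ℝ) : ℝ :=
  ∑ σ : Fin n → Bool,
    g (fun i => if σ i then 1 else -1) *
      ∏ i, (if σ i then (1 + y i) / 2 else (1 - y i) / 2)

lemma sum_bool_pi (n : ℕ) (h : Fin n → Bool → ℝ) :
    ∑ σ : Fin n → Bool, ∏ i, h i (σ i) = ∏ i, (h i true + h i false) := by
  rw [show (∏ i, (h i true + h i false)) = ∏ i, ∑ b : Bool, h i b by
    simp [Fintype.sum_bool], Finset.prod_univ_sum]
  apply Finset.sum_nbij' (fun σ => σ) (fun σ => σ) <;> simp [Fintype.mem_piFinset]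

lemma berE_congr {n : ℕ} {y : Fin n → ℝ} {g g' : (Fin n → ℝ) → ℝ}
    (h : ∀ σ : Fin n → Bool, g (fun i => if σ i then 1 else -1)
        = g' (fun i => if σ i then 1 else -1)) : berE n y g = berE n y g' :=
  Finset.sum_congr rfl fun σ _ => by rw [h σ]

lemma berE_sum {n : ℕ} {y : Fin n → ℝ} {ι : Type*} (s : Finset ι)
    (g : ι → (Fin n → ℝ) → ℝ) :
    berE n y (fun x => ∑ t ∈ s, g t x) = ∑ t ∈ s, berE n y (g t) := by
  simp only [berE, Finset.sum_mul]
  exact Finset.sum_comm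

lemma berE_smul {n : ℕ} {y : Fin n → ℝ} (c : ℝ) (g : (Fin n → ℝ) → ℝ) :
    berE n y (fun x => c * g x) = c * berE n y g := by
  simp only [berE, Finset.mul_sum, mul_assoc]

lemma berE_single {n : ℕ} (y : Fin n → ℝ) (i : Fin n) :
    berE n y (fun x => x i) = y i := by
  have h1 : berE n y (fun x => x i)
      = ∑ σ : Fin n → Bool, ∏ l, ((if l = i then (if σ l then (1:ℝ) else -1) else 1)
          * (if σ l then (1 + y l) / 2 else (1 - y l) / 2)) := by
    refine Finset.sum_congr rfl fun σ _ => ?_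
    rw [Finset.prod_mul_distrib, Finset.prod_ite_eq' Finset.univ i
      (fun l => if σ l then (1:ℝ) else -1)]
    simp
  rw [h1, sum_bool_pi n (fun l b => (if l = i then (if b then (1:ℝ) else -1) else 1)
      * (if b then (1 + y l) / 2 else (1 - y l) / 2))]
  have h2 : ∀ l, ((if l = i then (if true then (1:ℝ) else -1) else 1)
        * (if true then (1 + y l) / 2 else (1 - y l) / 2)
      + (if l = i then (if false then (1:ℝ) else -1) else 1)
        * (if false then (1 + y l) / 2 else (1 - y l) / 2)) = if l = i then y l else 1 := by
    intro l; by_cases h : l = i <;> simp [h] <;> ring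
  rw [Finset.prod_congr rfl fun l _ => h2 l, Finset.prod_ite_eq' Finset.univ i y]
  simp

lemma berE_triple {n : ℕ} (y : Fin n → ℝ) (i j k : Fin n)
    (hij : i ≠ j) (hjk : j ≠ k) (hik : i ≠ k) :
    berE n y (fun x => x i * x j * x k) = y i * y j * y k := by
  have h1 : berE n y (fun x => x i * x j * x k)
      = ∑ σ : Fin n → Bool, ∏ l,
          ((if l = i then (if σ l then (1:ℝ) else -1) else 1)
          * (if l = j then (if σ l then (1:ℝ) else -1) else 1)
          * (if l = k then (if σ l then (1:ℝ) else -1) else 1)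
          * (if σ l then (1 + y l) / 2 else (1 - y l) / 2)) := by
    refine Finset.sum_congr rfl fun σ _ => ?_
    rw [Finset.prod_mul_distrib, Finset.prod_mul_distrib, Finset.prod_mul_distrib,
      Finset.prod_ite_eq' Finset.univ i (fun l => if σ l then (1:ℝ) else -1),
      Finset.prod_ite_eq' Finset.univ j (fun l => if σ l then (1:ℝ) else -1),
      Finset.prod_ite_eq' Finset.univ k (fun l => if σ l then (1:ℝ) else -1)]
    simp
  rw [h1, sum_bool_pi n (fun l b =>
      (if l = i then (if b then (1:ℝ) else -1) else 1)
      * (if l = j then (if b then (1:ℝ) else -1) else 1)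
      * (if l = k then (if b then (1:ℝ) else -1) else 1)
      * (if b then (1 + y l) / 2 else (1 - y l) / 2))]
  have h2 : ∀ l, ((if l = i then (1:ℝ) else 1) * (if l = j then (1:ℝ) else 1)
        * (if l = k then (1:ℝ) else 1) * ((1 + y l) / 2)
      + (if l = i then (-1:ℝ) else 1) * (if l = j then (-1:ℝ) else 1)
        * (if l = k then (-1:ℝ) else 1) * ((1 - y l) / 2))
      = (if l = i then y l else 1) * (if l = j then y l else 1) * (if l = k then y l else 1) := by
    intro l
    by_cases hli : l = i
    · subst hli; simp [hij, hik]; ring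
    by_cases hlj : l = j
    · subst hlj; simp [Ne.symm hij, hjk]; ring
    by_cases hlk : l = k
    · subst hlk; simp [Ne.symm hik, Ne.symm hjk]; ring
    · simp [hli, hlj, hlk]; ring
  simp only [reduceIte, Bool.false_eq_true, if_false]
  rw [Finset.prod_congr rfl fun l _ => h2 l, Finset.prod_mul_distrib, Finset.prod_mul_distrib,
    Finset.prod_ite_eq' Finset.univ i y, Finset.prod_ite_eq' Finset.univ j y,
    Finset.prod_ite_eq' Finset.univ k y]
  simp

/-- for symmetric `G` and `z ∈ ℝ^n`,
`E_y[(x^T G x)(z^T x)] = 2 y^T G_wd z + Tr(G)(z^T y)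
  + Σ_{(i,j,k) pairwise distinct} y_i y_j y_k G_{ij} z_k`. -/
theorem expectation_quadratic_times_linear (n : ℕ) (hn : 1 ≤ n)
    (G : Matrix (Fin n) (Fin n) ℝ) (hG : G.IsSymm) (z : Fin n → ℝ)
    (y : Fin n → ℝ) (hy : ∀ i, y i ∈ Set.Icc (-1 : ℝ) 1) :
    berE n y (fun x => (x ⬝ᵥ G.mulVec x) * (z ⬝ᵥ x))
      = 2 * (y ⬝ᵥ (G - Matrix.diagonal fun i => G i i).mulVec z) + G.trace * (z ⬝ᵥ y)
        + ∑ i, ∑ j, ∑ k,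
            (if i ≠ j ∧ j ≠ k ∧ i ≠ k then y i * y j * y k * G i j * z k else 0) := by
  have expand : (fun x : Fin n → ℝ => (x ⬝ᵥ G.mulVec x) * (z ⬝ᵥ x))
      = fun x => ∑ i, ∑ j, ∑ k, (G i j * z k) * (x i * x j * x k) := by
    funext x
    calc (x ⬝ᵥ G.mulVec x) * (z ⬝ᵥ x)
        = (∑ i, ∑ j, x i * (G i j * x j)) * (∑ k, z k * x k) := by
          simp only [dotProduct, mulVec, Finset.mul_sum]
      _ = ∑ i, ∑ j, ∑ k, (x i * (G i j * x j)) * (z k * x k) := by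
          rw [Finset.sum_mul]
          refine Finset.sum_congr rfl fun i _ => ?_
          rw [Finset.sum_mul]
          exact Finset.sum_congr rfl fun j _ => Finset.mul_sum _ _ _
      _ = ∑ i, ∑ j, ∑ k, (G i j * z k) * (x i * x j * x k) :=
          Finset.sum_congr rfl fun i _ => Finset.sum_congr rfl fun j _ =>
            Finset.sum_congr rfl fun k _ => by ring
  rw [expand, berE_sum]
  have step : ∀ i, berE n y (fun x => ∑ j, ∑ k, (G i j * z k) * (x i * x j * x k))
      = ∑ j, ∑ k, (G i j * z k) * berE n y (fun x => x i * x j * x k) := by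
    intro i
    rw [berE_sum]
    exact Finset.sum_congr rfl fun j _ => by
      rw [berE_sum]
      exact Finset.sum_congr rfl fun k _ => berE_smul _ _
  simp only [step]
  have hM : ∀ i j k : Fin n, (G i j * z k) * berE n y (fun x => x i * x j * x k)
      = (if i = j then G i j * z k * y k else 0)
      + (if i = j then 0 else if j = k then y i * G i j * z k else 0)
      + (if i = j then 0 else if i = k then G i j * z k * y j else 0)
      + (if i ≠ j ∧ j ≠ k ∧ i ≠ k then y i * y j * y k * G i j * z k else 0) := by
    intro i j k
    by_cases hij : i = j
    · subst hij
      have hb : berE n y (fun x => x i * x i * x k) = y k := by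
        rw [berE_congr (g' := fun x => x k) fun σ => by by_cases h : σ i <;> simp [h]]
        exact berE_single y k
      rw [hb]; simp; try ring
    · by_cases hjk : j = k
      · subst hjk
        have hb : berE n y (fun x => x i * x j * x j) = y i := by
          rw [berE_congr (g' := fun x => x i) fun σ => by by_cases h : σ j <;> simp [h]]
          exact berE_single y i
        rw [hb]; simp [hij]; try ring
      · by_cases hik : i = k
        · subst hik
          have hb : berE n y (fun x => x i * x j * x i) = y j := by
            rw [berE_congr (g' := fun x => x j) fun σ => by
              by_cases h : σ i <;> by_cases h' : σ j <;> simp [h, h']]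
            exact berE_single y j
          rw [hb]; simp [hij, Ne.symm hij]; try ring
        · rw [berE_triple y i j k hij hjk hik]
          simp [hij, hjk, hik]; try ring
  simp only [hM, Finset.sum_add_distrib]
  have hdot : y ⬝ᵥ (G - Matrix.diagonal fun i => G i i).mulVec z
      = ∑ i, ∑ j, (if i = j then 0 else y i * G i j * z j) := by
    simp only [dotProduct, mulVec, Matrix.sub_apply, Matrix.diagonal_apply, Finset.mul_sum]
    refine Finset.sum_congr rfl fun i _ => Finset.sum_congr rfl fun j _ => ?_
    by_cases h : i = j <;> simp [h] <;> ring
  have S1 : (∑ i, ∑ j, ∑ k, (if i = j then G i j * z k * y k else 0))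
      = G.trace * (z ⬝ᵥ y) := by
    have h1 : ∀ i j : Fin n, (∑ k, if i = j then G i j * z k * y k else 0)
        = if i = j then G i j * (z ⬝ᵥ y) else 0 := by
      intro i j; by_cases h : i = j <;> simp [h, dotProduct, Finset.mul_sum, mul_assoc]
    simp only [h1, Finset.sum_ite_eq, Finset.mem_univ, if_true]
    rw [Matrix.trace, Finset.sum_mul]
    simp [Matrix.diag]
  have S2 : (∑ i, ∑ j, ∑ k, (if i = j then 0 else if j = k then y i * G i j * z k else 0))
      = y ⬝ᵥ (G - Matrix.diagonal fun i => G i i).mulVec z := by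
    have h1 : ∀ i j : Fin n, (∑ k, if i = j then 0 else if j = k then y i * G i j * z k else 0)
        = if i = j then 0 else y i * G i j * z j := by
      intro i j; by_cases h : i = j <;> simp [h, Finset.sum_ite_eq]
    simp only [h1, hdot]
  have S3 : (∑ i, ∑ j, ∑ k, (if i = j then 0 else if i = k then G i j * z k * y j else 0))
      = y ⬝ᵥ (G - Matrix.diagonal fun i => G i i).mulVec z := by
    have h1 : ∀ i j : Fin n, (∑ k, if i = j then 0 else if i = k then G i j * z k * y j else 0)
        = if i = j then 0 else G i j * z i * y j := by
      intro i j; by_cases h : i = j <;> simp [h, Finset.sum_ite_eq]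
    simp only [h1, hdot]
    rw [Finset.sum_comm]
    refine Finset.sum_congr rfl fun i _ => Finset.sum_congr rfl fun j _ => ?_
    by_cases h : i = j
    · simp [h]
    · rw [if_neg (Ne.symm h), if_neg h, hG.apply]; ring
  rw [S1, S2, S3]
  ring
end
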